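/- arXiv:2605.06060 — 4 statements merged into one kernel-verified Lean document; each statement's English description precedes it below -/
import Mathlib

section
/- In a constant-product AMM with reserves x, y > 0, fee multiplier η ∈ (0,1), and reference price P* > 0, the maximal profit over q ≥ 0 of the trade Π(q) = yηq/(x + ηq) − P*q equals (√y − √(xP*/η))_+², where (t)_+ = max(t,0). -/
/-!
With `u = x + η q` the profit is `y + x P / η - (y x / u + P u / η)`, and AM-GM bounds
the bracket below by `2 √y √(x P / η)`, with equality at `u = √y √(x P / η) η / P`.
This `u` comes from some `q ≥ 0` exactly when `√(x P / η) < √y`; otherwise `y η ≤ x P`,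
the profit is nonpositive, and `q = 0` is optimal.
-/

noncomputable def cpProfit (x y η P q : ℝ) : ℝ := y * η * q / (x + η * q) - P * q

lemma cpProfit_le_sq_sub_sqrt {x y η P q : ℝ} (hx : 0 ≤ x) (hy : 0 ≤ y) (hη : 0 < η)
    (hP : 0 < P) (hq : 0 < x + η * q) :
    cpProfit x y η P q ≤ (√y - √(x * P / η)) ^ 2 := by
  set s := √y
  set a := √(x * P / η)
  have hs : s ^ 2 = y := Real.sq_sqrt hy
  have ha : a ^ 2 * η = x * P := by
    rw [Real.sq_sqrt (by positivity), div_mul_cancel₀ _ hη.ne']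
  have key : (s - a) ^ 2 - cpProfit x y η P q
      = ((x + η * q) * P - a * s * η) ^ 2 / (η * P * (x + η * q)) := by
    rw [cpProfit, eq_div_iff (by positivity)]
    field_simp
    linear_combination (η ^ 2 * P * q) * hs
      + (x * P - η * (s - a) ^ 2 + η * P * q - 2 * a * s * η + η * a ^ 2) * ha
  have : 0 ≤ (s - a) ^ 2 - cpProfit x y η P q := key ▸ by positivity
  linarith

lemma cpProfit_nonpos {x y η P q : ℝ} (hx : 0 < x) (hη : 0 ≤ η) (hP : 0 ≤ P)
    (hyx : y * η ≤ x * P) (hq : 0 ≤ q) : cpProfit x y η P q ≤ 0 := by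
  rw [cpProfit, sub_nonpos, div_le_iff₀ (by positivity)]
  nlinarith [mul_le_mul_of_nonneg_right hyx hq,
    mul_nonneg (mul_nonneg hP hq) (mul_nonneg hη hq)]

lemma cpProfit_eq_sq_sub_sqrt_of_lt {x y η P : ℝ} (hx : 0 < x) (hη : 0 < η) (hP : 0 < P)
    (h : √(x * P / η) < √y) :
    cpProfit x y η P (√(x * P / η) * (√y - √(x * P / η)) / P) =
      (√y - √(x * P / η)) ^ 2 := by
  set s := √y
  set a := √(x * P / η)
  have hy : 0 < y := Real.sqrt_pos.1 ((Real.sqrt_nonneg _).trans_lt h)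
  have hs : s ^ 2 = y := Real.sq_sqrt hy.le
  have ha : a ^ 2 * η = x * P := by
    rw [Real.sq_sqrt (by positivity), div_mul_cancel₀ _ hη.ne']
  have ha0 : 0 < a := Real.sqrt_pos.2 (by positivity)
  have hu : x + η * (a * (s - a) / P) = a * s * η / P := by
    field_simp
    linear_combination -ha
  rw [cpProfit, hu, ← hs]
  field_simp

theorem cp_optimal_profit_general (x y η Pstar : ℝ)
    (hx : 0 < x) (hη : η ∈ Set.Ioo (0:ℝ) 1) (hP : 0 < Pstar) :
    IsGreatest ((fun q : ℝ => y * η * q / (x + η * q) - Pstar * q) '' Set.Ici 0)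
      ((max (Real.sqrt y - Real.sqrt (x * Pstar / η)) 0) ^ 2) := by
  change IsGreatest (cpProfit x y η Pstar '' Set.Ici 0) _
  obtain ⟨hη, -⟩ := hη
  rcases le_or_gt √y √(x * Pstar / η) with hle | hlt
  · rw [max_eq_right (sub_nonpos.2 hle)]
    have hyx : y ≤ x * Pstar / η := (Real.sqrt_le_sqrt_iff (by positivity)).1 hle
    refine ⟨⟨0, Set.self_mem_Ici, by simp [cpProfit]⟩, ?_⟩
    rintro _ ⟨q, hq, rfl⟩
    rw [le_div_iff₀ hη] at hyx
    simpa using cpProfit_nonpos hx hη.le hP.le hyx hq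
  · rw [max_eq_left (sub_nonneg.2 hlt.le)]
    have hy : 0 ≤ y := (Real.sqrt_pos.1 ((Real.sqrt_nonneg _).trans_lt hlt)).le
    refine ⟨⟨_, ?_, cpProfit_eq_sq_sub_sqrt_of_lt hx hη hP hlt⟩, ?_⟩
    · exact div_nonneg (mul_nonneg (Real.sqrt_nonneg _) (sub_nonneg.2 hlt.le)) hP.le
    rintro _ ⟨q, hq, rfl⟩
    exact cpProfit_le_sq_sub_sqrt hx.le hy hη hP
      (add_pos_of_pos_of_nonneg hx (mul_nonneg hη.le hq))

/-- The maximal profit over `q ≥ 0` of `Π(q) = yηq/(x+ηq) − P⋆ q` equals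
`(√y − √(xP⋆/η))₊²`. -/
theorem cp_optimal_profit (x y η Pstar : ℝ)
    (hx : 0 < x) (hy : 0 < y) (hη : η ∈ Set.Ioo (0:ℝ) 1) (hP : 0 < Pstar) :
    IsGreatest ((fun q : ℝ => y * η * q / (x + η * q) - Pstar * q) '' Set.Ici 0)
      ((max (Real.sqrt y - Real.sqrt (x * Pstar / η)) 0) ^ 2) :=
  cp_optimal_profit_general x y η Pstar hx hη hP
end

section
/- In a constant-product AMM with reserves x, y > 0, pool price P = y/x, fee multiplier η ∈ (0,1), and zero fixed execution cost, profitable arbitrage exists (i.e., the maximal directional profit (√y − √(xP*/η))_+² or (√(xP*) − √(y/η))_+² is strictly positive) if and only if the reference price P* lies outside the interval [ηP, P/η]. -/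
lemma max_sq_pos_iff (t : ℝ) : 0 < (max t 0) ^ 2 ↔ 0 < t := by
  rcases le_or_gt t 0 with h | h
  · simp [max_eq_right h]
    linarith
  · simp [max_eq_left h.le, pow_pos h, h]

/-- Profitable arbitrage exists iff the reference price lies outside the fee band
`[ηP, P/η]`, where `P = y/x`. -/
theorem cp_profitable_iff (x y η Pstar : ℝ)
    (hx : 0 < x) (hy : 0 < y) (hη : η ∈ Set.Ioo (0:ℝ) 1) (hP : 0 < Pstar) :
    (0 < (max (Real.sqrt y - Real.sqrt (x * Pstar / η)) 0) ^ 2 ∨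
     0 < (max (Real.sqrt (x * Pstar) - Real.sqrt (y / η)) 0) ^ 2) ↔
    Pstar ∉ Set.Icc (η * (y / x)) ((y / x) / η) := by
  obtain ⟨hη0, hη1⟩ := hη
  rw [max_sq_pos_iff, max_sq_pos_iff, sub_pos, sub_pos,
    Real.sqrt_lt_sqrt_iff (by positivity), Real.sqrt_lt_sqrt_iff (by positivity),
    Set.mem_Icc, not_and_or, not_le, not_le]
  apply or_congr
  · rw [div_lt_iff₀ hη0, mul_div_assoc', lt_div_iff₀ hx]
    constructor <;> intro h <;> linarith [mul_comm x Pstar, mul_comm η y, mul_comm Pstar x]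
  · rw [div_lt_iff₀ hη0, div_div, div_lt_iff₀ (by positivity : (0:ℝ) < x * η)]
    constructor <;> intro h <;> nlinarith
end

section
/- With the sequential execution recursion R₀ = x, χ_r = 1{s_r R_{r−1} > 0 and |R_{r−1}| ≥ γ_r + u_r}, R_r = R_{r−1} − χ_r s_r u_r, suppose γ_r ≤ γ̄ for all r, for some γ̄ ≥ 0. Let C = Σ_{r=1}^K χ_r u_r denote the total successful correction. Then (|R_K| − γ̄)_+ ≤ ((|x| − γ̄)_+ − C)_+. -/
/-- Service bound: the post-execution excess beyond the dead-zone cap `γ̄` is bounded by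
the pre-execution excess minus the total successful correction, clipped at zero. -/
theorem sequential_execution_service_bound (K : ℕ) (x γbar : ℝ)
    (s u γ χ : ℕ → ℝ) (R : ℕ → ℝ)
    (hs : ∀ r, s r = 1 ∨ s r = -1) (hu : ∀ r, 0 < u r)
    (hγ : ∀ r, 0 ≤ γ r) (hγbar : ∀ r, γ r ≤ γbar)
    (hR0 : R 0 = x)
    (hχ : ∀ r, χ (r + 1) =
      if s (r + 1) * R r > 0 ∧ |R r| ≥ γ (r + 1) + u (r + 1) then (1:ℝ) else 0)
    (hrec : ∀ r, R (r + 1) = R r - χ (r + 1) * s (r + 1) * u (r + 1)) :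
    max (|R K| - γbar) 0 ≤
      max (max (|x| - γbar) 0 - ∑ r ∈ Finset.range K, χ (r + 1) * u (r + 1)) 0 := by
  induction K with
  | zero => simp [hR0]
  | succ r ih =>
    rw [Finset.sum_range_succ]
    by_cases h : s (r + 1) * R r > 0 ∧ |R r| ≥ γ (r + 1) + u (r + 1)
    · have hχ1 : χ (r + 1) = 1 := by rw [hχ r]; simp [h]
      have hRabs : |R (r + 1)| = |R r| - u (r + 1) := by
        have hur := hu (r + 1)
        have hge : u (r + 1) ≤ |R r| := by
          have := hγ (r + 1); linarith [h.2]
        rcases hs (r + 1) with hs1 | hs1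
        · rw [hs1] at h
          have hRpos : 0 < R r := by linarith [h.1]
          rw [hrec r, hχ1, hs1]
          rw [abs_of_pos hRpos] at hge ⊢
          rw [abs_of_nonneg (by linarith)]; ring
        · rw [hs1] at h
          have hRneg : R r < 0 := by nlinarith [h.1]
          rw [hrec r, hχ1, hs1]
          rw [abs_of_neg hRneg] at hge ⊢
          rw [abs_of_nonpos (by linarith)]; ring
      rw [hRabs, hχ1, one_mul]
      have hur := hu (r + 1)
      have h1 : |R r| - u (r + 1) - γbar ≤
          max (max (|x| - γbar) 0 - ∑ i ∈ Finset.range r, χ (i + 1) * u (i + 1))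
            0 - u (r + 1) := by
        have : |R r| - γbar ≤ max (|R r| - γbar) 0 := le_max_left _ _
        linarith [ih]
      apply max_le _ (le_max_right _ _)
      calc |R r| - u (r + 1) - γbar
          ≤ max (max (|x| - γbar) 0 - ∑ i ∈ Finset.range r, χ (i + 1) * u (i + 1))
            0 - u (r + 1) := h1
        _ ≤ _ := by
            rcases le_total (max (|x| - γbar) 0 -
                ∑ i ∈ Finset.range r, χ (i + 1) * u (i + 1)) 0 with hc | hc
            · rw [max_eq_right hc]
              linarith [le_max_right (max (|x| - γbar) 0 -
                  (∑ i ∈ Finset.range r, χ (i + 1) * u (i + 1) + u (r + 1))) (0:ℝ)]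
            · rw [max_eq_left hc]
              have := le_max_left (max (|x| - γbar) 0 -
                  (∑ i ∈ Finset.range r, χ (i + 1) * u (i + 1) + u (r + 1))) (0:ℝ)
              linarith
    · have hχ0 : χ (r + 1) = 0 := by rw [hχ r]; simp [h]
      have hReq : R (r + 1) = R r := by rw [hrec r, hχ0]; ring
      rw [hReq, hχ0, zero_mul, add_zero]
      exact ih
end

section
/- Consider a Markov chain x_{n+1} = z_n + w_{n+1}, where given x_n = x, the post-execution value z_n satisfies |z_n| ≤ |x| almost surely, and on an event A(x) of probability at least p★ (when |x| ≥ x★ > γ̄) additionally |z_n| ≤ (1 − λ★)|x| + λ★γ̄; w_{n+1} is independent of (x_n, z_n) with M(α) = E[exp(α|w_{n+1}|)] < ∞. Then for V(x) = exp(α|x|) and all x with |x| ≥ x★: E[V(x_{n+1}) | x_n = x] ≤ M(α)·((1 − p★) + p★·exp(αλ★(γ̄ − |x|)))·V(x). -/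
/-!
Since `|z + w| ≤ |z| + |w|`, the integrand is at most `exp (α |z|) · exp (α |w|)`, and
`exp (α |z|)` is dominated by the two-valued function equal to
`exp (α ((1 - λ★) |x| + λ★ γ̄))` on `A` and to `V x = exp (α |x|)` off `A`. This function
of `𝟙_A` is independent of `w`, so the expectation factors into `M(α)` times its mean, which
is at most `(1 - p★) V x + p★ exp (α λ★ (γ̄ - |x|)) V x` because the smaller value is taken
with probability `μ A ≥ p★`.
-/

open MeasureTheory ProbabilityTheory

lemma Real.exp_mul_abs_add_le {α : ℝ} (hα : 0 ≤ α) (a b : ℝ) :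
    Real.exp (α * |a + b|) ≤ Real.exp (α * |a|) * Real.exp (α * |b|) := by
  rw [← Real.exp_add, ← mul_add]
  exact Real.exp_le_exp.2 (mul_le_mul_of_nonneg_left (abs_add_le a b) hα)

lemma Set.le_add_indicator_one_mul_sub {Ω : Type*} {A : Set Ω} {ω : Ω} {t a b : ℝ}
    (hb : t ≤ b) (ha : ω ∈ A → t ≤ a) :
    t ≤ b + A.indicator (fun _ => (1 : ℝ)) ω * (a - b) := by
  by_cases hω : ω ∈ A
  · simpa [hω] using ha hω
  · simpa [hω] using hb

section Integral

variable {Ω : Type*} [MeasurableSpace Ω] {μ : Measure Ω}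

lemma integral_le_integral_mul_integral_of_indepFun {H F G : Ω → ℝ}
    (hFG : IndepFun F G μ) (hF : Integrable F μ) (hG : Integrable G μ)
    (hH : 0 ≤ᵐ[μ] H) (hHFG : H ≤ᵐ[μ] F * G) :
    ∫ ω, H ω ∂μ ≤ (∫ ω, F ω ∂μ) * ∫ ω, G ω ∂μ := by
  rw [← hFG.integral_mul_eq_mul_integral hF.aestronglyMeasurable hG.aestronglyMeasurable]
  exact integral_mono_of_nonneg hH (hFG.integrable_mul hF hG) hHFG

variable [IsProbabilityMeasure μ]

lemma integral_add_indicator_one_mul_sub_le {A : Set Ω} (hA : MeasurableSet A) {p a b : ℝ}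
    (hab : a ≤ b) (hpA : ENNReal.ofReal p ≤ μ A) :
    ∫ ω, (b + A.indicator (fun _ => (1 : ℝ)) ω * (a - b)) ∂μ ≤ (1 - p) * b + p * a := by
  have hp : p ≤ μ.real A := (ENNReal.ofReal_le_iff_le_toReal (measure_ne_top μ A)).1 hpA
  have hint : Integrable (A.indicator fun _ => (1 : ℝ)) μ := (integrable_const 1).indicator hA
  rw [integral_add (integrable_const b) (hint.mul_const _), integral_mul_const,
    integral_indicator_const _ hA]
  simp only [integral_const, probReal_univ, smul_eq_mul, one_mul, mul_one]
  nlinarith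

end Integral

theorem drift_bound_outside_general {Ω : Type*} [MeasurableSpace Ω] (μ : Measure Ω)
    [IsProbabilityMeasure μ] (z w : Ω → ℝ) (A : Set Ω)
    (x γbar xstar lamstar pstar α : ℝ)
    (hxs : γbar < xstar) (hlam : lamstar ∈ Set.Ioc (0:ℝ) 1)
    (hα : 0 < α)
    (hA : MeasurableSet A)
    (hM : Integrable (fun ω => Real.exp (α * |w ω|)) μ)
    (hind : IndepFun (fun ω => (z ω, A.indicator (fun _ => (1:ℝ)) ω)) w μ)
    (hPA : ENNReal.ofReal pstar ≤ μ A)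
    (hmono : ∀ᵐ ω ∂μ, |z ω| ≤ |x|)
    (hgood : ∀ᵐ ω ∂μ, ω ∈ A → |z ω| ≤ (1 - lamstar) * |x| + lamstar * γbar)
    (hx : xstar ≤ |x|) :
    ∫ ω, Real.exp (α * |z ω + w ω|) ∂μ ≤
      (∫ ω, Real.exp (α * |w ω|) ∂μ) *
        ((1 - pstar) + pstar * Real.exp (α * lamstar * (γbar - |x|))) *
        Real.exp (α * |x|) := by
  set V := Real.exp (α * |x|)
  set r := Real.exp (α * lamstar * (γbar - |x|))
  have hexp_good : Real.exp (α * ((1 - lamstar) * |x| + lamstar * γbar)) = r * V := by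
    rw [← Real.exp_add]; ring_nf
  have hrV : r * V ≤ V := by
    rw [← hexp_good]
    exact Real.exp_le_exp.2 (mul_le_mul_of_nonneg_left (by nlinarith [hlam.1]) hα.le)
  let F : ℝ → ℝ := fun t => V + t * (r * V - V)
  let G : ℝ → ℝ := fun t => Real.exp (α * |t|)
  have hFG : IndepFun (F ∘ A.indicator fun _ => (1 : ℝ)) (G ∘ w) μ :=
    (hind.comp measurable_snd measurable_id).comp (by fun_prop) (by fun_prop)
  have hbound : ∀ᵐ ω ∂μ,
      Real.exp (α * |z ω + w ω|) ≤ F (A.indicator (fun _ => 1) ω) * G (w ω) := by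
    filter_upwards [hmono, hgood] with ω hzx hzA
    refine (Real.exp_mul_abs_add_le hα.le _ _).trans
      (mul_le_mul_of_nonneg_right ?_ (by positivity))
    refine Set.le_add_indicator_one_mul_sub (Real.exp_le_exp.2 ?_) fun hω => ?_
    · exact mul_le_mul_of_nonneg_left hzx hα.le
    · rw [← hexp_good]
      exact Real.exp_le_exp.2 (mul_le_mul_of_nonneg_left (hzA hω) hα.le)
  calc ∫ ω, Real.exp (α * |z ω + w ω|) ∂μ
      ≤ (∫ ω, F (A.indicator (fun _ => 1) ω) ∂μ) * ∫ ω, G (w ω) ∂μ :=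
        integral_le_integral_mul_integral_of_indepFun hFG
          ((integrable_const V).add (((integrable_const (1 : ℝ)).indicator hA).mul_const _)) hM
          (.of_forall fun _ => by positivity) hbound
    _ ≤ ((1 - pstar) * V + pstar * (r * V)) * ∫ ω, G (w ω) ∂μ :=
        mul_le_mul_of_nonneg_right (integral_add_indicator_one_mul_sub_le hA hrV hPA)
          (integral_nonneg fun _ => by positivity)
    _ = _ := by ring

/-- One-step Foster–Lyapunov bound outside the large-error threshold: the expected
Lyapunov function after one block is bounded by the mixture rate times `V(x)`. -/
theorem drift_bound_outside {Ω : Type*} [MeasurableSpace Ω] (μ : Measure Ω)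
    [IsProbabilityMeasure μ] (z w : Ω → ℝ) (A : Set Ω)
    (x γbar xstar lamstar pstar α : ℝ)
    (hγ : 0 ≤ γbar) (hxs : γbar < xstar) (hlam : lamstar ∈ Set.Ioc (0:ℝ) 1)
    (hp : pstar ∈ Set.Ioc (0:ℝ) 1) (hα : 0 < α)
    (hz : Measurable z) (hw : Measurable w) (hA : MeasurableSet A)
    (hM : Integrable (fun ω => Real.exp (α * |w ω|)) μ)
    (hind : IndepFun (fun ω => (z ω, A.indicator (fun _ => (1:ℝ)) ω)) w μ)
    (hPA : ENNReal.ofReal pstar ≤ μ A)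
    (hmono : ∀ᵐ ω ∂μ, |z ω| ≤ |x|)
    (hgood : ∀ᵐ ω ∂μ, ω ∈ A → |z ω| ≤ (1 - lamstar) * |x| + lamstar * γbar)
    (hx : xstar ≤ |x|) :
    ∫ ω, Real.exp (α * |z ω + w ω|) ∂μ ≤
      (∫ ω, Real.exp (α * |w ω|) ∂μ) *
        ((1 - pstar) + pstar * Real.exp (α * lamstar * (γbar - |x|))) *
        Real.exp (α * |x|) :=
  drift_bound_outside_general μ z w A x γbar xstar lamstar pstar α hxs hlam hα hA hM hind hPA hmono
    hgood hx
end
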